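/- arXiv:0911.3386 — 2 statements merged into one kernel-verified Lean document; each statement's English description precedes it below -/
import Mathlib

section
/- For every dimension d ≥ 1 and every smooth compactly supported function u on ℝ^d \ {0}, the Hardy inequality holds: ((d-2)^2/4) ∫ |u(x)|²/|x|² dx ≤ ∫ |∇u(x)|² dx. -/
open MeasureTheory Set Metric

namespace HardyAux

variable {d : ℕ}

/-- Cut-off version of `x ↦ 1/‖x‖²`, smooth on all of `ℝ^d`. -/
noncomputable def rho (b : ContDiffBump (0 : EuclideanSpace ℝ (Fin d)))
    (x : EuclideanSpace ℝ (Fin d)) : ℝ :=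
  (1 - b x) * (‖x‖ ^ 2)⁻¹

lemma rho_eq (b : ContDiffBump (0 : EuclideanSpace ℝ (Fin d)))
    {x : EuclideanSpace ℝ (Fin d)} (hx : b.rOut ≤ ‖x‖) :
    rho b x = (‖x‖ ^ 2)⁻¹ := by
  have : b x = 0 := b.zero_of_le_dist (by simpa [dist_zero_right] using hx)
  simp [rho, this]

lemma rho_smooth (b : ContDiffBump (0 : EuclideanSpace ℝ (Fin d))) :
    ContDiff ℝ ((⊤ : ℕ∞) : WithTop ℕ∞) (rho b) := by
  rw [contDiff_iff_contDiffAt]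
  intro x
  rcases eq_or_ne x 0 with rfl | hx
  · apply (contDiffAt_const (c := (0:ℝ))).congr_of_eventuallyEq
    filter_upwards [ball_mem_nhds (0 : EuclideanSpace ℝ (Fin d)) b.rIn_pos] with y hy
    simp [rho, b.one_of_mem_closedBall (ball_subset_closedBall hy)]
  · have hne : ‖x‖ ^ 2 ≠ 0 := by simpa using pow_ne_zero 2 (norm_ne_zero_iff.2 hx)
    have : ContDiffAt ℝ ((⊤ : ℕ∞) : WithTop ℕ∞)
        (fun y : EuclideanSpace ℝ (Fin d) => (1 - b y) * (‖y‖ ^ 2)⁻¹) x :=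
      (contDiffAt_const.sub b.contDiff.contDiffAt).mul
        (((contDiff_norm_sq ℝ (E := EuclideanSpace ℝ (Fin d))).contDiffAt).inv hne)
    exact this

/-- The vector field component `gfun b i x = rho b x * x i`. -/
noncomputable def gfun (b : ContDiffBump (0 : EuclideanSpace ℝ (Fin d))) (i : Fin d)
    (x : EuclideanSpace ℝ (Fin d)) : ℝ :=
  rho b x * x i

lemma gfun_smooth (b : ContDiffBump (0 : EuclideanSpace ℝ (Fin d))) (i : Fin d) :
    ContDiff ℝ ((⊤ : ℕ∞) : WithTop ℕ∞) (gfun b i) := by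
  exact (rho_smooth b).mul (ContinuousLinearMap.contDiff (EuclideanSpace.proj (𝕜 := ℝ) i))

lemma hasFDerivAt_h (i : Fin d) (x : EuclideanSpace ℝ (Fin d)) (hx : x ≠ 0) :
    HasFDerivAt (fun y : EuclideanSpace ℝ (Fin d) => (‖y‖ ^ 2)⁻¹ * y i)
      (((‖x‖ ^ 2)⁻¹) • (EuclideanSpace.proj (𝕜 := ℝ) i)
        + (x i) • ((-((‖x‖ ^ 2) ^ 2)⁻¹) • (2 • (innerSL ℝ x)))) x := by
  have hne : ‖x‖ ^ 2 ≠ 0 := by simpa using pow_ne_zero 2 (norm_ne_zero_iff.2 hx)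
  have h1 : HasFDerivAt (fun y : EuclideanSpace ℝ (Fin d) => ‖y‖ ^ 2) (2 • (innerSL ℝ x)) x :=
    (hasStrictFDerivAt_norm_sq x).hasFDerivAt
  have h2 : HasFDerivAt (fun y : EuclideanSpace ℝ (Fin d) => (‖y‖ ^ 2)⁻¹)
      ((-((‖x‖ ^ 2) ^ 2)⁻¹) • (2 • (innerSL ℝ x))) x :=
    (hasDerivAt_inv hne).comp_hasFDerivAt x h1
  have h3 : HasFDerivAt (fun y : EuclideanSpace ℝ (Fin d) => y i)
      (EuclideanSpace.proj (𝕜 := ℝ) i) x := (EuclideanSpace.proj (𝕜 := ℝ) i).hasFDerivAt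
  exact h2.mul h3

lemma fderiv_gfun (b : ContDiffBump (0 : EuclideanSpace ℝ (Fin d))) (i : Fin d)
    {x : EuclideanSpace ℝ (Fin d)} (hx : 2 * b.rOut ≤ ‖x‖) :
    fderiv ℝ (gfun b i) x (EuclideanSpace.single i 1)
      = (‖x‖ ^ 2)⁻¹ - 2 * (x i) ^ 2 * ((‖x‖ ^ 2) ^ 2)⁻¹ := by
  have hx0 : x ≠ 0 := by
    intro h
    rw [h, norm_zero] at hx
    nlinarith [b.rOut_pos]
  have hev : gfun b i =ᶠ[nhds x] (fun y => (‖y‖ ^ 2)⁻¹ * y i) := by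
    filter_upwards [ball_mem_nhds x b.rOut_pos] with y hy
    have : b.rOut ≤ ‖y‖ := by
      have h1 : ‖x - y‖ < b.rOut := by simpa [dist_eq_norm] using mem_ball'.1 hy
      have h2 : ‖x‖ - ‖y‖ ≤ ‖x - y‖ := norm_sub_norm_le x y
      linarith
    rw [gfun, rho_eq b this, mul_comm]
  rw [hev.fderiv_eq, (hasFDerivAt_h i x hx0).fderiv]
  have hinner : (innerSL ℝ x) (EuclideanSpace.single i (1:ℝ)) = x i := by
    simp [EuclideanSpace.inner_single_right]
  have hproj : (EuclideanSpace.proj (𝕜 := ℝ) i) (EuclideanSpace.single i (1:ℝ)) = 1 := by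
    simp [EuclideanSpace.single_apply]
  simp only [ContinuousLinearMap.add_apply, ContinuousLinearMap.coe_smul', Pi.smul_apply,
    hproj, hinner, smul_eq_mul]
  ring

end HardyAux

open HardyAux

set_option maxHeartbeats 2000000 in
/-- **Hardy's inequality in ℝ^d**: for every `d ≥ 1` and every smooth compactly
supported function `u` on `ℝ^d \ {0}`,
`((d-2)^2/4) ∫ |u|²/|x|² ≤ ∫ |∇u|²`. -/
theorem hardy_inequality (d : ℕ) (hd : 1 ≤ d)
    (u : EuclideanSpace ℝ (Fin d) → ℝ)
    (hu : ContDiff ℝ (⊤ : ℕ∞) u) (hcomp : HasCompactSupport u)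
    (hsupp : tsupport u ⊆ {x : EuclideanSpace ℝ (Fin d) | x ≠ 0}) :
    ((d : ℝ) - 2) ^ 2 / 4 * ∫ x, u x ^ 2 / ‖x‖ ^ 2 ≤ ∫ x, ‖gradient u x‖ ^ 2 := by
  classical
  have hud : Differentiable ℝ u := hu.differentiable (by simp)
  have hcont : Continuous u := hu.continuous
  have hfc : Continuous (fun x => fderiv ℝ u x) := hu.continuous_fderiv (by simp)
  have h0 : (0 : EuclideanSpace ℝ (Fin d)) ∉ tsupport u := fun h => (hsupp h) rfl
  obtain ⟨ε, hε, hball⟩ : ∃ ε > 0, ball (0 : EuclideanSpace ℝ (Fin d)) ε ⊆ (tsupport u)ᶜ := by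
    rcases Metric.mem_nhds_iff.1 (((isClosed_tsupport u).isOpen_compl).mem_nhds h0) with
      ⟨ε, hε, h⟩
    exact ⟨ε, hε, h⟩
  have hts : ∀ x ∈ tsupport u, ε ≤ ‖x‖ := by
    intro x hx
    by_contra h
    exact hball (by simpa [mem_ball, dist_zero_right] using lt_of_not_ge h) hx
  set b : ContDiffBump (0 : EuclideanSpace ℝ (Fin d)) :=
    ⟨ε/4, ε/2, by positivity, by linarith⟩ with hb
  have hbrOut : b.rOut = ε/2 := rfl
  have htsb : ∀ x ∈ tsupport u, 2 * b.rOut ≤ ‖x‖ := by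
    intro x hx; rw [hbrOut]; have := hts x hx; linarith
  have hρ : ∀ x ∈ tsupport u, rho b x = (‖x‖ ^ 2)⁻¹ := fun x hx =>
    rho_eq b (by rw [hbrOut]; have := hts x hx; linarith)
  have hu0 : ∀ x ∉ tsupport u, u x = 0 := fun x hx => image_eq_zero_of_notMem_tsupport hx
  have hfu0 : ∀ x ∉ tsupport u, fderiv ℝ u x = 0 := by
    intro x hx; by_contra h; exact hx (support_fderiv_subset (𝕜 := ℝ) (by simpa using h))
  have hgrad : ∀ x, gradient u x = (InnerProductSpace.toDual ℝ _).symm (fderiv ℝ u x) :=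
    fun _ => rfl
  have hgrad0 : ∀ x ∉ tsupport u, gradient u x = 0 := by
    intro x hx; rw [hgrad, hfu0 x hx]; simp
  have hgradc : Continuous (fun x => gradient u x) := by
    simp only [hgrad]; exact (LinearIsometryEquiv.continuous _).comp hfc
  have hK : IsCompact (tsupport u) := hcomp
  have int1 : Integrable (fun x => u x ^ 2 * rho b x) := by
    apply Continuous.integrable_of_hasCompactSupport
    · exact (hcont.pow 2).mul (rho_smooth b).continuous
    · exact HasCompactSupport.intro hK (fun x hx => by simp [hu0 x hx])
  have int2 : Integrable (fun x => u x * fderiv ℝ u x x * rho b x) := by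
    apply Continuous.integrable_of_hasCompactSupport
    · exact (hcont.mul (hfc.clm_apply continuous_id)).mul (rho_smooth b).continuous
    · exact HasCompactSupport.intro hK (fun x hx => by simp [hu0 x hx])
  have intB : Integrable (fun x => ‖gradient u x‖ ^ 2) := by
    apply Continuous.integrable_of_hasCompactSupport
    · exact hgradc.norm.pow 2
    · exact HasCompactSupport.intro hK (fun x hx => by simp [hgrad0 x hx])
  have hsq : ∀ x, HasFDerivAt (fun y => u y ^ 2) ((2 * u x) • fderiv ℝ u x) x := by
    intro x
    have h := (hud x).hasFDerivAt.mul (hud x).hasFDerivAt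
    have e1 : (fun y => u y ^ 2) = fun y => u y * u y := by funext y; ring
    have e2 : (2 * u x) • fderiv ℝ u x = u x • fderiv ℝ u x + u x • fderiv ℝ u x := by module
    rw [e1, e2]; exact h
  have hsqd : Differentiable ℝ (fun y => u y ^ 2) := fun x => (hsq x).differentiableAt
  have hsqf : ∀ x, fderiv ℝ (fun y => u y ^ 2) x = (2 * u x) • fderiv ℝ u x :=
    fun x => (hsq x).fderiv
  have hdecomp : ∀ x : EuclideanSpace ℝ (Fin d),
      (fderiv ℝ u x) x = ∑ i, x i * fderiv ℝ u x (EuclideanSpace.single i 1) := by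
    intro x
    have hxsum : (∑ i, x i • EuclideanSpace.single i (1:ℝ)) = x := by
      ext j; rw [WithLp.ofLp_sum, Finset.sum_apply]; simp [EuclideanSpace.single_apply]
    calc (fderiv ℝ u x) x = (fderiv ℝ u x) (∑ i, x i • EuclideanSpace.single i (1:ℝ)) := by
          rw [hxsum]
      _ = ∑ i, x i * fderiv ℝ u x (EuclideanSpace.single i 1) := by
          rw [map_sum]; simp
  have hgic : ∀ i : Fin d, Continuous (fun x => fderiv ℝ (gfun b i) x) := fun i =>
    (gfun_smooth b i).continuous_fderiv (by simp)
  have intgi : ∀ i : Fin d, Integrable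
      (fun x => u x ^ 2 * fderiv ℝ (gfun b i) x (EuclideanSpace.single i 1)) := by
    intro i
    apply Continuous.integrable_of_hasCompactSupport
    · exact (hcont.pow 2).mul ((hgic i).clm_apply continuous_const)
    · exact HasCompactSupport.intro hK (fun x hx => by simp [hu0 x hx])
  have hsqf0 : ∀ x ∉ tsupport u, fderiv ℝ (fun y => u y ^ 2) x = 0 := by
    intro x hx; rw [hsqf x, hfu0 x hx]; simp
  have hsqfc : Continuous (fun x => fderiv ℝ (fun y => u y ^ 2) x) := by
    have : (fun x => fderiv ℝ (fun y => u y ^ 2) x)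
        = fun x => (2 * u x) • fderiv ℝ u x := funext hsqf
    rw [this]
    exact (continuous_const.mul hcont).smul hfc
  have intgi2 : ∀ i : Fin d, Integrable
      (fun x => fderiv ℝ (fun y => u y ^ 2) x (EuclideanSpace.single i 1) * gfun b i x) := by
    intro i
    apply Continuous.integrable_of_hasCompactSupport
    · exact (hsqfc.clm_apply continuous_const).mul (gfun_smooth b i).continuous
    · exact HasCompactSupport.intro hK (fun x hx => by simp [hsqf0 x hx])
  have intgi3 : ∀ i : Fin d, Integrable (fun x => u x ^ 2 * gfun b i x) := by
    intro i
    apply Continuous.integrable_of_hasCompactSupport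
    · exact (hcont.pow 2).mul (gfun_smooth b i).continuous
    · exact HasCompactSupport.intro hK (fun x hx => by simp [hu0 x hx])
  have hibp : ∀ i : Fin d,
      (∫ x, u x ^ 2 * fderiv ℝ (gfun b i) x (EuclideanSpace.single i 1))
        = - ∫ x, fderiv ℝ (fun y => u y ^ 2) x (EuclideanSpace.single i 1) * gfun b i x :=
    fun i => integral_mul_fderiv_eq_neg_fderiv_mul_of_integrable (intgi2 i) (intgi i)
      (intgi3 i) (fun x _ => hsqd x) (fun x _ => (gfun_smooth b i).differentiable (by simp) x)
  -- the key integral identity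
  have hstar : ((d:ℝ) - 2) * ∫ x, u x ^ 2 * rho b x
      = - (2 * ∫ x, u x * fderiv ℝ u x x * rho b x) := by
    have step1 : (fun x => ((d:ℝ) - 2) * (u x ^ 2 * rho b x))
        = fun x => ∑ i, u x ^ 2 * fderiv ℝ (gfun b i) x (EuclideanSpace.single i 1) := by
      funext x
      by_cases hx : x ∈ tsupport u
      · have hn : ε ≤ ‖x‖ := hts x hx
        have hxn : ‖x‖ ≠ 0 := ne_of_gt (lt_of_lt_of_le hε hn)
        have hne : ‖x‖ ^ 2 ≠ 0 := pow_ne_zero 2 hxn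
        have hgder : ∀ i : Fin d, fderiv ℝ (gfun b i) x (EuclideanSpace.single i 1)
            = (‖x‖ ^ 2)⁻¹ - 2 * (x i) ^ 2 * ((‖x‖ ^ 2) ^ 2)⁻¹ :=
          fun i => fderiv_gfun b i (htsb x hx)
        simp only [hgder, hρ x hx]
        have hsum : ∑ i, (x i) ^ 2 = ‖x‖ ^ 2 := by
          rw [EuclideanSpace.norm_sq_eq]
          simp [Real.norm_eq_abs, sq_abs]
        rw [← Finset.mul_sum, Finset.sum_sub_distrib, Finset.sum_const, ← Finset.sum_mul,
          ← Finset.mul_sum, hsum]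
        simp only [Finset.card_univ, Fintype.card_fin, nsmul_eq_mul]
        field_simp
      · simp [hu0 x hx]
    have step4 : (fun x => ∑ i, fderiv ℝ (fun y => u y ^ 2) x (EuclideanSpace.single i 1)
          * gfun b i x)
        = fun x => 2 * (u x * fderiv ℝ u x x * rho b x) := by
      funext x
      simp only [hsqf x, gfun, ContinuousLinearMap.coe_smul', Pi.smul_apply, smul_eq_mul]
      rw [hdecomp x, Finset.mul_sum, Finset.sum_mul, Finset.mul_sum]
      apply Finset.sum_congr rfl
      intro i _
      ring
    calc ((d:ℝ) - 2) * ∫ x, u x ^ 2 * rho b x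
        = ∫ x, ((d:ℝ) - 2) * (u x ^ 2 * rho b x) := (integral_const_mul _ _).symm
      _ = ∫ x, ∑ i, u x ^ 2 * fderiv ℝ (gfun b i) x (EuclideanSpace.single i 1) := by
          rw [step1]
      _ = ∑ i, ∫ x, u x ^ 2 * fderiv ℝ (gfun b i) x (EuclideanSpace.single i 1) :=
          integral_finset_sum _ (fun i _ => intgi i)
      _ = ∑ i, - ∫ x, fderiv ℝ (fun y => u y ^ 2) x (EuclideanSpace.single i 1) * gfun b i x := by
          exact Finset.sum_congr rfl (fun i _ => hibp i)
      _ = - ∑ i, ∫ x, fderiv ℝ (fun y => u y ^ 2) x (EuclideanSpace.single i 1) * gfun b i x := by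
          rw [Finset.sum_neg_distrib]
      _ = - ∫ x, ∑ i, fderiv ℝ (fun y => u y ^ 2) x (EuclideanSpace.single i 1) * gfun b i x := by
          rw [integral_finset_sum _ (fun i _ => intgi2 i)]
      _ = - ∫ x, 2 * (u x * fderiv ℝ u x x * rho b x) := by rw [step4]
      _ = - (2 * ∫ x, u x * fderiv ℝ u x x * rho b x) := by rw [integral_const_mul]
  -- pointwise nonnegativity
  have hpt : ∀ x, 0 ≤ ‖gradient u x‖ ^ 2 + ((d:ℝ) - 2) * (u x * fderiv ℝ u x x * rho b x)
      + (((d:ℝ) - 2) / 2) ^ 2 * (u x ^ 2 * rho b x) := by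
    intro x
    by_cases hx : x ∈ tsupport u
    · have hn : ε ≤ ‖x‖ := hts x hx
      have hxn : ‖x‖ ≠ 0 := ne_of_gt (lt_of_lt_of_le hε hn)
      set c : ℝ := (((d:ℝ) - 2) / 2) * u x * (‖x‖ ^ 2)⁻¹ with hc
      have key : ‖gradient u x‖ ^ 2 + ((d:ℝ) - 2) * (u x * fderiv ℝ u x x * rho b x)
          + (((d:ℝ) - 2) / 2) ^ 2 * (u x ^ 2 * rho b x)
          = ‖gradient u x + c • x‖ ^ 2 := by
        rw [norm_add_sq_real, real_inner_smul_right, norm_smul, mul_pow, hρ x hx]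
        have hinner : (inner ℝ (gradient u x) x : ℝ) = fderiv ℝ u x x := by
          rw [hgrad]
          exact InnerProductSpace.toDual_symm_apply
        rw [hinner, Real.norm_eq_abs, sq_abs, hc]
        field_simp
      rw [key]
      positivity
    · simp [hu0 x hx, hgrad0 x hx, hfu0 x hx]
  -- integrate the pointwise bound
  have hint : 0 ≤ (∫ x, ‖gradient u x‖ ^ 2)
      + ((d:ℝ) - 2) * (∫ x, u x * fderiv ℝ u x x * rho b x)
      + (((d:ℝ) - 2) / 2) ^ 2 * (∫ x, u x ^ 2 * rho b x) := by
    have h1 : 0 ≤ ∫ x, (‖gradient u x‖ ^ 2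
        + ((d:ℝ) - 2) * (u x * fderiv ℝ u x x * rho b x)
        + (((d:ℝ) - 2) / 2) ^ 2 * (u x ^ 2 * rho b x)) :=
      integral_nonneg hpt
    have intBJ : Integrable (fun x => ‖gradient u x‖ ^ 2
        + ((d:ℝ) - 2) * (u x * fderiv ℝ u x x * rho b x)) := intB.add (int2.const_mul _)
    have intC : Integrable
        (fun x => (((d:ℝ) - 2) / 2) ^ 2 * (u x ^ 2 * rho b x)) := int1.const_mul _
    have intJ' : Integrable
        (fun x => ((d:ℝ) - 2) * (u x * fderiv ℝ u x x * rho b x)) := int2.const_mul _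
    rwa [integral_add intBJ intC, integral_add intB intJ',
      integral_const_mul, integral_const_mul] at h1
  have hA : (∫ x, u x ^ 2 / ‖x‖ ^ 2) = ∫ x, u x ^ 2 * rho b x := by
    congr 1
    funext x
    by_cases hx : x ∈ tsupport u
    · rw [hρ x hx, div_eq_mul_inv]
    · simp [hu0 x hx]
  rw [hA]
  set A : ℝ := ∫ x, u x ^ 2 * rho b x
  set J : ℝ := ∫ x, u x * fderiv ℝ u x x * rho b x
  set B : ℝ := ∫ x, ‖gradient u x‖ ^ 2
  have h2 : ((d:ℝ) - 2) * (((d:ℝ) - 2) * A) = ((d:ℝ) - 2) * (-(2 * J)) := by rw [hstar]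
  nlinarith [h2, hint]
end

section
/- Iterated Hardy inequality on the half-line: for every n ∈ ℕ and every u ∈ C_0^∞((exp^{(n)}(0), ∞)), ∫ |u'(x)|² dx ≥ ∫ ( 1/(4x²) + 1/(4x²(ln x)²) + ... + 1/(4x²(ln x)²···(ln^{(n)} x)²) ) |u(x)|² dx. -/
open MeasureTheory Set

/-- The iterated-logarithm Hardy weight
`W_n(x) = 1/(4x²) + 1/(4x²(ln x)²) + ⋯ + 1/(4x²(ln x)²⋯(ln^{(n)} x)²)`,
where `ln^{(j)}` is the `j`-fold iterated logarithm (`ln^{(0)} x = x`). -/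
noncomputable def iterHardyWeight (n : ℕ) (x : ℝ) : ℝ :=
  ∑ k ∈ Finset.range (n + 1),
    1 / (4 * ∏ j ∈ Finset.range (k + 1), (Real.log^[j] x) ^ 2)

namespace IterHardyAux

noncomputable def Q (k : ℕ) (x : ℝ) : ℝ := ∏ i ∈ Finset.range k, Real.log^[i] x

lemma expIter_nonneg (m : ℕ) : 0 ≤ Real.exp^[m] 0 := by
  cases m with
  | zero => simp
  | succ m => rw [Function.iterate_succ_apply']; exact (Real.exp_pos _).le

lemma iter_log_gt {n : ℕ} {x : ℝ} (hx : Real.exp^[n] 0 < x) :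
    ∀ j, j ≤ n → Real.exp^[n - j] 0 < Real.log^[j] x := by
  intro j
  induction j with
  | zero => intro _; simpa using hx
  | succ j ih =>
    intro hj
    have hj' : j ≤ n := Nat.le_of_succ_le hj
    have h1 : Real.exp^[n - j] 0 < Real.log^[j] x := ih hj'
    have hnj : n - j = (n - (j + 1)) + 1 := by omega
    have hpos : 0 < Real.exp^[n - j] 0 := by
      rw [hnj, Function.iterate_succ_apply']; exact Real.exp_pos _
    have h2 := Real.log_lt_log hpos h1
    rw [hnj, Function.iterate_succ_apply', Real.log_exp] at h2
    rwa [Function.iterate_succ_apply']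

lemma iter_log_pos {n : ℕ} {x : ℝ} (hx : Real.exp^[n] 0 < x) {j : ℕ} (hj : j ≤ n) :
    0 < Real.log^[j] x :=
  lt_of_le_of_lt (expIter_nonneg _) (iter_log_gt hx j hj)

lemma Q_pos {n : ℕ} {x : ℝ} (hx : Real.exp^[n] 0 < x) {k : ℕ} (hk : k ≤ n + 1) :
    0 < Q k x := by
  refine Finset.prod_pos fun i hi => iter_log_pos hx ?_
  have := Finset.mem_range.mp hi; omega

lemma hasDerivAt_iterLog {n : ℕ} {x : ℝ} (hx : Real.exp^[n] 0 < x) :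
    ∀ j, j ≤ n → HasDerivAt (Real.log^[j]) ((Q j x)⁻¹) x := by
  intro j
  induction j with
  | zero => intro _; simpa [Q] using (hasDerivAt_id x)
  | succ j ih =>
    intro hj
    have hj' : j ≤ n := Nat.le_of_succ_le hj
    have hL : 0 < Real.log^[j] x := iter_log_pos hx hj'
    have h := (Real.hasDerivAt_log hL.ne').comp x (ih hj')
    have heq : (Real.log ∘ Real.log^[j]) = Real.log^[j + 1] := by
      funext y; simp [Function.iterate_succ_apply']
    rw [heq] at h
    convert h using 1 <;> try rfl
    simp only [Q, Finset.prod_range_succ, mul_inv]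
    ring

lemma hasDerivAt_f {n : ℕ} {x : ℝ} (hx : Real.exp^[n] 0 < x) :
    ∀ k, k ≤ n → HasDerivAt (fun y => (Q (k + 1) y)⁻¹)
      (-(Q (k + 1) x)⁻¹ * ∑ i ∈ Finset.range (k + 1), (Q (i + 1) x)⁻¹) x := by
  intro k
  induction k with
  | zero =>
    intro _
    have hx0 : x ≠ 0 := by
      have : 0 < Real.log^[0] x := iter_log_pos hx (Nat.zero_le n)
      simpa using this.ne'
    have h0 : (fun y : ℝ => (Q 1 y)⁻¹) = fun y => y⁻¹ := by
      funext y; simp [Q]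
    rw [h0]
    convert hasDerivAt_inv hx0 using 1 <;> try rfl
    simp [Q, sq, mul_inv]
  | succ k ih =>
    intro hk
    have hk' : k ≤ n := Nat.le_of_succ_le hk
    have hL : 0 < Real.log^[k + 1] x := iter_log_pos hx hk
    have hQ : 0 < Q (k + 1) x := Q_pos hx (by omega)
    have hinner : HasDerivAt (fun y => (Real.log^[k + 1] y)⁻¹)
        (-(Q (k + 1) x)⁻¹ / (Real.log^[k + 1] x) ^ 2) x :=
      (hasDerivAt_iterLog hx (k + 1) hk).inv hL.ne'
    have hmul : HasDerivAt (fun y => (Q (k + 1) y)⁻¹ * (Real.log^[k + 1] y)⁻¹) _ x := (ih hk').mul hinner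
    have heq : (fun y => (Q (k + 1) y)⁻¹ * (Real.log^[k + 1] y)⁻¹)
        = fun y => (Q (k + 2) y)⁻¹ := by
      funext y; simp [Q, Finset.prod_range_succ, mul_inv]; ring
    rw [heq] at hmul
    convert hmul using 1 <;> try rfl
    have hQ2 : Q (k + 2) x = Q (k + 1) x * Real.log^[k + 1] x := by
      simp [Q, Finset.prod_range_succ]
    rw [Finset.sum_range_succ, hQ2]
    have h1 := hQ.ne'
    have h2 := hL.ne'
    field_simp
    ring

lemma sum_mul_partial (f : ℕ → ℝ) (m : ℕ) :
    2 * ∑ k ∈ Finset.range m, f k * ∑ i ∈ Finset.range (k + 1), f i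
      = (∑ k ∈ Finset.range m, f k) ^ 2 + ∑ k ∈ Finset.range m, f k ^ 2 := by
  induction m with
  | zero => simp
  | succ m ih =>
    simp only [Finset.sum_range_succ] at ih ⊢
    linear_combination ih

noncomputable def rho (n : ℕ) (y : ℝ) : ℝ :=
  (1 / 2) * ∑ k ∈ Finset.range (n + 1), (Q (k + 1) y)⁻¹

noncomputable def rhod (n : ℕ) (y : ℝ) : ℝ :=
  (-(1 / 2)) * ∑ k ∈ Finset.range (n + 1),
    (Q (k + 1) y)⁻¹ * ∑ i ∈ Finset.range (k + 1), (Q (i + 1) y)⁻¹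

lemma hasDerivAt_rho {n : ℕ} {x : ℝ} (hx : Real.exp^[n] 0 < x) :
    HasDerivAt (rho n) (rhod n x) x := by
  have h : HasDerivAt (fun y => ∑ k ∈ Finset.range (n + 1), (Q (k + 1) y)⁻¹)
      (∑ k ∈ Finset.range (n + 1),
        -(Q (k + 1) x)⁻¹ * ∑ i ∈ Finset.range (k + 1), (Q (i + 1) x)⁻¹) x :=
    HasDerivAt.fun_sum fun k hk => hasDerivAt_f hx k (by have := Finset.mem_range.mp hk; omega)
  have h2 := h.const_mul (1 / 2 : ℝ)
  convert h2 using 1 <;> try rfl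
  simp only [rhod, Finset.mul_sum]
  refine Finset.sum_congr rfl fun k _ => ?_
  refine Finset.sum_congr rfl fun i _ => ?_
  ring

lemma weight_eq (n : ℕ) (y : ℝ) :
    iterHardyWeight n y = (1 / 4) * ∑ k ∈ Finset.range (n + 1), ((Q (k + 1) y)⁻¹) ^ 2 := by
  rw [iterHardyWeight, Finset.mul_sum]
  refine Finset.sum_congr rfl fun k _ => ?_
  rw [show (∏ j ∈ Finset.range (k + 1), (Real.log^[j] y) ^ 2) = (Q (k + 1) y) ^ 2 from
    Finset.prod_pow _ _ _]
  rw [one_div, mul_inv, inv_pow]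
  ring

lemma key_identity {n : ℕ} {x : ℝ} (hx : Real.exp^[n] 0 < x) :
    rhod n x + (rho n x) ^ 2 = - iterHardyWeight n x := by
  rw [weight_eq, rho, rhod]
  linear_combination (-(1 / 4 : ℝ)) * sum_mul_partial (fun k => (Q (k + 1) x)⁻¹) (n + 1)

lemma f_continuousAt {n : ℕ} {x : ℝ} (hx : Real.exp^[n] 0 < x) {k : ℕ} (hk : k ≤ n) :
    ContinuousAt (fun y => (Q (k + 1) y)⁻¹) x :=
  (hasDerivAt_f hx k hk).continuousAt

lemma rhod_continuousAt {n : ℕ} {x : ℝ} (hx : Real.exp^[n] 0 < x) :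
    ContinuousAt (rhod n) x := by
  have hsum : ContinuousAt (fun y => ∑ k ∈ Finset.range (n + 1),
      (Q (k + 1) y)⁻¹ * ∑ i ∈ Finset.range (k + 1), (Q (i + 1) y)⁻¹) x := by
    refine tendsto_finset_sum _ fun k hk => ?_
    have hk' : k ≤ n := by have := Finset.mem_range.mp hk; omega
    exact (f_continuousAt hx hk').mul
      (tendsto_finset_sum _ fun i hi => f_continuousAt hx
        (by have := Finset.mem_range.mp hi; omega))
  exact hsum.const_mul _

end IterHardyAux

/-- **Iterated Hardy inequality on the half-line**: for every `n ∈ ℕ` and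
every `u ∈ C_0^∞((exp^{(n)}(0), ∞))`,
`∫ |u'|² dx ≥ ∫ (1/(4x²) + ⋯ + 1/(4x²(ln x)²⋯(ln^{(n)} x)²)) |u|² dx`. -/
theorem iterated_hardy_halfline (n : ℕ) (u : ℝ → ℝ)
    (hu : ContDiff ℝ (⊤ : ℕ∞) u) (hcomp : HasCompactSupport u)
    (hsupp : tsupport u ⊆ Set.Ioi (Real.exp^[n] 0)) :
    ∫ x in Set.Ioi (Real.exp^[n] 0), iterHardyWeight n x * u x ^ 2
      ≤ ∫ x in Set.Ioi (Real.exp^[n] 0), deriv u x ^ 2 := by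
  classical
  set a : ℝ := Real.exp^[n] 0 with ha
  obtain ⟨δ, δpos, hthick⟩ := hcomp.exists_thickening_subset_open isOpen_Ioi hsupp
  set b : ℝ := a + δ / 2 with hb
  have hab : a < b := by rw [hb]; linarith
  have hsuppb : tsupport u ⊆ Set.Ioi b := by
    intro x hx
    have h2 : x - δ / 2 ∈ Metric.thickening δ (tsupport u) := by
      rw [Metric.mem_thickening_iff]
      exact ⟨x, hx, by rw [Real.dist_eq]; rw [abs_of_nonpos (by linarith)]; linarith⟩
    have h3 : a < x - δ / 2 := hthick h2
    simp only [Set.mem_Ioi]; rw [hb]; linarith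
  have hub : ∀ y, y < b → u y = 0 := by
    intro y hy
    by_contra h
    have : y ∈ Set.Ioi b := hsuppb (subset_tsupport u h)
    simp only [Set.mem_Ioi] at this; linarith
  have hdub : ∀ y, y < b → deriv u y = 0 := by
    intro y hy
    have hev : u =ᶠ[nhds y] (fun _ => (0 : ℝ)) := by
      filter_upwards [Iio_mem_nhds hy] with z hz
      exact hub z hz
    rw [hev.deriv_eq]; simp
  set ρ : ℝ → ℝ := IterHardyAux.rho n with hρ
  set ρd : ℝ → ℝ := IterHardyAux.rhod n with hρd
  set G : ℝ → ℝ := fun x =>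
    if a < x then ρd x * u x ^ 2 + ρ x * (2 * u x * deriv u x) else 0 with hG
  set g : ℝ → ℝ := fun x => ρ x * u x ^ 2 with hg
  have hcu : Continuous u := hu.continuous
  have hcdu : Continuous (deriv u) := hu.continuous_deriv (by simp)
  -- g has derivative G everywhere
  have hgd : ∀ x, HasDerivAt g (G x) x := by
    intro x
    rcases lt_or_ge x b with hxb | hxb
    · have hev : ∀ᶠ y in nhds x, g y = 0 := by
        filter_upwards [Iio_mem_nhds hxb] with y hy
        simp [hg, hub y hy]
      have h0 : HasDerivAt g 0 x :=
        (hasDerivAt_const x (0 : ℝ)).congr_of_eventuallyEq hev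
      have hGx : G x = 0 := by
        by_cases hax : a < x
        · simp [hG, hax, hub x hxb, hdub x hxb]
        · simp [hG, hax]
      rw [hGx]; exact h0
    · have hax : a < x := lt_of_lt_of_le hab hxb
      have h1 : HasDerivAt ρ (ρd x) x := IterHardyAux.hasDerivAt_rho hax
      have hdu : HasDerivAt u (deriv u x) x := (hu.differentiable (by simp) x).hasDerivAt
      have h2 : HasDerivAt (fun y => u y ^ 2) (2 * u x * deriv u x) x := by
        have := hdu.fun_pow 2
        simpa [mul_comm, mul_assoc, mul_left_comm] using this
      have h3 := h1.mul h2
      have hGx : G x = ρd x * u x ^ 2 + ρ x * (2 * u x * deriv u x) := by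
        simp [hG, hax]
      rw [hGx]; exact h3
  -- G is continuous
  have hG0 : ∀ y, y < b → G y = 0 := by
    intro y hy
    by_cases hay : a < y
    · simp [hG, hay, hub y hy, hdub y hy]
    · simp [hG, hay]
  have hGcont : Continuous G := by
    rw [continuous_iff_continuousAt]
    intro x
    rcases lt_or_ge x b with hxb | hxb
    · refine (continuousAt_const : ContinuousAt (fun _ : ℝ => (0:ℝ)) _).congr ?_
      filter_upwards [Iio_mem_nhds hxb] with y hy
      exact (hG0 y hy).symm
    · have hax : a < x := lt_of_lt_of_le hab hxb
      have hc : ContinuousAt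
          (fun y => ρd y * u y ^ 2 + ρ y * (2 * u y * deriv u y)) x := by
        refine ContinuousAt.add ?_ ?_
        · exact (IterHardyAux.rhod_continuousAt hax).mul ((hcu.pow 2).continuousAt)
        · exact ((IterHardyAux.hasDerivAt_rho hax).continuousAt).mul
            ((continuous_const.mul hcu).mul hcdu).continuousAt
      refine hc.congr ?_
      filter_upwards [Ioi_mem_nhds hax] with y hy
      simp [hG, Set.mem_Ioi.mp hy]
  -- support facts
  have hGsupp : Function.support G ⊆ tsupport u := by
    intro x hx
    by_contra hxs
    have hux : u x = 0 := image_eq_zero_of_notMem_tsupport hxs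
    have hdx : deriv u x = 0 := by
      by_contra h
      exact hxs (support_deriv_subset h)
    apply hx
    simp [hG, hux, hdx]
  have hGcs : HasCompactSupport G := hcomp.mono' hGsupp
  -- integral of G over ℝ is zero
  have hGint0 : (∫ x, G x) = 0 := by
    obtain ⟨R0, hR0⟩ := hcomp.isBounded.subset_closedBall 0
    rw [Real.closedBall_eq_Icc] at hR0
    set R : ℝ := |R0| with hRdef
    have hR : tsupport u ⊆ Set.Icc (-R) R := by
      refine hR0.trans ?_
      refine Set.Icc_subset_Icc ?_ ?_
      · simp only [zero_sub]
        exact neg_le_neg (le_abs_self R0)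
      · simp only [zero_add]
        exact le_abs_self R0
    have hRnn : 0 ≤ R := abs_nonneg _
    have hnotin : ∀ x : ℝ, x ∉ Set.Icc (-R) R → x ∉ tsupport u := fun x hx hmem => hx (hR hmem)
    have hG0' : ∀ x, x ∉ Set.Ioc (-(R + 1)) (R + 1) → G x = 0 := by
      intro x hx
      refine Function.support_subset_iff'.mp hGsupp x (hnotin x ?_)
      simp only [Set.mem_Ioc, not_and_or, not_lt, not_le] at hx
      simp only [Set.mem_Icc, not_and_or, not_le]
      rcases hx with h1 | h2
      · left; linarith
      · right; linarith
    have h1 : (∫ x, G x) = ∫ x in Set.Ioc (-(R + 1)) (R + 1), G x :=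
      (setIntegral_eq_integral_of_forall_compl_eq_zero hG0').symm
    have hle : -(R + 1) ≤ R + 1 := by linarith
    rw [h1, ← intervalIntegral.integral_of_le hle]
    rw [intervalIntegral.integral_eq_sub_of_hasDerivAt (fun x _ => hgd x)
      (hGcont.intervalIntegrable _ _)]
    have hg0 : ∀ x, x ∉ tsupport u → g x = 0 := by
      intro x hx; simp [hg, image_eq_zero_of_notMem_tsupport hx]
    have hR1 : (R + 1 : ℝ) ∉ tsupport u := by
      refine hnotin _ ?_
      simp only [Set.mem_Icc, not_and_or, not_le]
      right; linarith
    have hR2 : (-(R + 1) : ℝ) ∉ tsupport u := by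
      refine hnotin _ ?_
      simp only [Set.mem_Icc, not_and_or, not_le]
      left; linarith
    rw [hg0 _ hR1, hg0 _ hR2, sub_zero]
  -- continuity of the other integrands
  have hWeq : iterHardyWeight n = fun y => (1 / 4 : ℝ) *
      ∑ k ∈ Finset.range (n + 1), ((IterHardyAux.Q (k + 1) y)⁻¹) ^ 2 :=
    funext (IterHardyAux.weight_eq n)
  have hWcont : Continuous (fun x => iterHardyWeight n x * u x ^ 2) := by
    rw [continuous_iff_continuousAt]
    intro x
    rcases lt_or_ge x b with hxb | hxb
    · refine (continuousAt_const : ContinuousAt (fun _ : ℝ => (0:ℝ)) _).congr ?_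
      filter_upwards [Iio_mem_nhds hxb] with y hy
      simp [hub y hy]
    · have hax : a < x := lt_of_lt_of_le hab hxb
      have hWx : ContinuousAt (iterHardyWeight n) x := by
        rw [hWeq]
        have hsum : ContinuousAt (fun y => ∑ k ∈ Finset.range (n + 1),
            ((IterHardyAux.Q (k + 1) y)⁻¹) ^ 2) x := by
          refine tendsto_finset_sum _ fun k hk => ?_
          exact (IterHardyAux.f_continuousAt hax
            (by have := Finset.mem_range.mp hk; omega)).pow 2
        exact hsum.const_mul _
      exact hWx.mul ((hcu.pow 2).continuousAt)
  have hqcont : Continuous (fun x => (deriv u x - ρ x * u x) ^ 2) := by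
    have hbase : Continuous (fun x => deriv u x - ρ x * u x) := by
      rw [continuous_iff_continuousAt]
      intro x
      rcases lt_or_ge x b with hxb | hxb
      · refine (continuousAt_const : ContinuousAt (fun _ : ℝ => (0:ℝ)) _).congr ?_
        filter_upwards [Iio_mem_nhds hxb] with y hy
        simp [hub y hy, hdub y hy]
      · have hax : a < x := lt_of_lt_of_le hab hxb
        exact (hcdu.continuousAt).sub
          (((IterHardyAux.hasDerivAt_rho hax).continuousAt).mul hcu.continuousAt)
    exact hbase.pow 2
  -- compact supports and integrability
  have hcs1 : HasCompactSupport (fun x => deriv u x ^ 2) := by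
    refine hcomp.mono' ?_
    intro x hx
    have hne : deriv u x ≠ 0 := fun h => hx (by simp [h])
    exact support_deriv_subset hne
  have hcs2 : HasCompactSupport (fun x => iterHardyWeight n x * u x ^ 2) := by
    refine hcomp.mono' ?_
    intro x hx
    have hne : u x ≠ 0 := fun h => hx (by simp [h])
    exact subset_tsupport u hne
  have hcs3 : HasCompactSupport (fun x => (deriv u x - ρ x * u x) ^ 2) := by
    refine hcomp.mono' ?_
    intro x hx
    by_contra hxs
    have hux : u x = 0 := image_eq_zero_of_notMem_tsupport hxs
    have hdx : deriv u x = 0 := by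
      by_contra h
      exact hxs (support_deriv_subset h)
    exact hx (by simp [hux, hdx])
  have hint1 : Integrable (fun x => deriv u x ^ 2) :=
    (hcdu.pow 2).integrable_of_hasCompactSupport hcs1
  have hint2 : Integrable (fun x => iterHardyWeight n x * u x ^ 2) :=
    hWcont.integrable_of_hasCompactSupport hcs2
  have hint3 : Integrable (fun x => (deriv u x - ρ x * u x) ^ 2) :=
    hqcont.integrable_of_hasCompactSupport hcs3
  have hintG : Integrable G := hGcont.integrable_of_hasCompactSupport hGcs
  -- pointwise identity on Ioi a
  have key : ∀ x ∈ Set.Ioi a, deriv u x ^ 2 - iterHardyWeight n x * u x ^ 2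
      = (deriv u x - ρ x * u x) ^ 2 + G x := by
    intro x hx
    have hax : a < x := hx
    have hid : ρd x + ρ x ^ 2 = - iterHardyWeight n x := IterHardyAux.key_identity hax
    have hGx : G x = ρd x * u x ^ 2 + ρ x * (2 * u x * deriv u x) := by
      simp [hG, hax]
    rw [hGx]
    linear_combination (-(u x ^ 2)) * hid
  have hsplit : ∫ x in Set.Ioi a, (deriv u x ^ 2 - iterHardyWeight n x * u x ^ 2)
      = ∫ x in Set.Ioi a, ((deriv u x - ρ x * u x) ^ 2 + G x) :=
    setIntegral_congr_fun measurableSet_Ioi key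
  rw [integral_sub hint1.integrableOn hint2.integrableOn,
    integral_add hint3.integrableOn hintG.integrableOn] at hsplit
  have hGIoi : ∫ x in Set.Ioi a, G x = ∫ x, G x := by
    refine setIntegral_eq_integral_of_forall_compl_eq_zero fun x hx => ?_
    simp only [Set.mem_Ioi, not_lt] at hx
    simp [hG, not_lt.mpr hx]
  have hnonneg : 0 ≤ ∫ x in Set.Ioi a, (deriv u x - ρ x * u x) ^ 2 :=
    setIntegral_nonneg measurableSet_Ioi fun x _ => sq_nonneg _
  rw [hGIoi, hGint0] at hsplit
  linarith
end
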